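/- Let X be a real normed vector space of dimension 3 and let n ≥ 3 be odd. Then there exist n points x_1,…,x_n in X for which the Fermat–Torricelli set ft(x_1,…,x_n) contains at least two distinct points, if and only if there exist continuous linear functionals φ_1,…,φ_n on X with ‖φ_i‖ = 1 for all i and Σ_{i=1}^n φ_i = 0, such that, writing F_i = F(φ_i) and calling F_i a point-face if it is a singleton and a segment-face if its linear span is two-dimensional, the following three conditions hold: (a) there exists a nonzero vector v ∈ X lying in the linear span of F_i for every index i such that F_i is a point-face; (b) for every pair of indices i, j such that F_i is a point-face and F_j is a segment-face, the linear span of F_i ∪ F_j has dimension 2; (c) there exists a nonzero vector w ∈ X lying in the linear span of F_j for every index j such that F_j is a segment-face. -/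

import Mathlib

/-!
A point `p` minimizes `∑ ‖p - x i‖` exactly when there are functionals `φ i` of norm at most one
with `∑ φ i = 0` and `φ i (p - x i) = ‖p - x i‖`: one direction is a one-line estimate, the other
is Hahn–Banach for the ℓ¹-norm on `Xⁿ`, extending the functional that vanishes on the diagonal.
Such a certificate at one minimizer is a certificate at every minimizer, so for two minimizers
`a ≠ b` the vector `b - a` lies in the span of every face `F(φ i)`. Conversely, a nonzero `u` in
all these spans is `y i + u - y i` with both `y i` and `y i + u` normed by `φ i`, and then `0` and
`u` are minimizers for the points `-y i`.

In dimension three the span of a face is a line (a point-face), a plane (a segment-face) or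
everything, and conditions (a)–(c) say precisely that the faces share such a direction: if there
is a point-face, (b) puts its line inside every segment-face's plane.
-/

/-- The Fermat–Torricelli set of the points `x 0, …, x (n-1)`: the set of points minimizing
the sum of distances to the `x i`. -/
def ft {X : Type*} [NormedAddCommGroup X] {n : ℕ} (x : Fin n → X) : Set X :=
  {p | ∀ q : X, ∑ i, ‖p - x i‖ ≤ ∑ i, ‖q - x i‖}

/-- The face of the unit sphere determined by a norm-one functional `φ`. -/
def face {X : Type*} [NormedAddCommGroup X] [NormedSpace ℝ X] (φ : X →L[ℝ] ℝ) : Set X :=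
  {u | ‖u‖ = 1 ∧ φ u = 1}

/-- A face is a point-face if it is a singleton. -/
def IsPointFace {X : Type*} [NormedAddCommGroup X] [NormedSpace ℝ X]
    (φ : X →L[ℝ] ℝ) : Prop :=
  ∃ u : X, face φ = {u}

/-- A face is a segment-face if its linear span is two-dimensional. -/
def IsSegmentFace {X : Type*} [NormedAddCommGroup X] [NormedSpace ℝ X]
    (φ : X →L[ℝ] ℝ) : Prop :=
  Module.finrank ℝ (Submodule.span ℝ (face φ)) = 2

open Submodule

section

variable {X : Type*} [NormedAddCommGroup X] [NormedSpace ℝ X]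

theorem apply_le_norm_of_norm_le_one {φ : X →L[ℝ] ℝ} (hφ : ‖φ‖ ≤ 1) (z : X) : φ z ≤ ‖z‖ :=
  (le_abs_self _).trans ((φ.le_of_opNorm_le hφ z).trans_eq (one_mul _))

theorem norm_eq_one_of_apply_eq_norm {φ : X →L[ℝ] ℝ} (hφ : ‖φ‖ ≤ 1) {z : X} (hz0 : z ≠ 0)
    (hz : φ z = ‖z‖) : ‖φ‖ = 1 := by
  refine le_antisymm hφ ((mul_le_mul_iff_left₀ (norm_pos_iff.2 hz0)).1 ?_)
  calc 1 * ‖z‖ = φ z := by rw [hz, one_mul]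
    _ ≤ ‖φ z‖ := le_abs_self _
    _ ≤ ‖φ‖ * ‖z‖ := φ.le_opNorm z

theorem mem_span_face_of_apply_eq_norm (φ : X →L[ℝ] ℝ) {z : X} (hz : φ z = ‖z‖) :
    z ∈ span ℝ (face φ) := by
  rcases eq_or_ne z 0 with rfl | hz0
  · exact zero_mem _
  have hnz : ‖z‖ ≠ 0 := norm_ne_zero_iff.2 hz0
  have hunit : ‖z‖⁻¹ • z ∈ face φ :=
    ⟨by rw [norm_smul, norm_inv, norm_norm, inv_mul_cancel₀ hnz],
      by rw [map_smul, smul_eq_mul, hz, inv_mul_cancel₀ hnz]⟩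
  simpa [smul_smul, mul_inv_cancel₀ hnz] using smul_mem _ ‖z‖ (subset_span hunit)

theorem apply_sum_smul_eq_norm_of_mem_face {φ : X →L[ℝ] ℝ} (hφ : ‖φ‖ ≤ 1) {m : ℕ}
    {t : Fin m → ℝ} (ht : ∀ k, 0 ≤ t k) {g : Fin m → X} (hg : ∀ k, g k ∈ face φ) :
    φ (∑ k, t k • g k) = ‖∑ k, t k • g k‖ := by
  have happly : φ (∑ k, t k • g k) = ∑ k, t k := by simp [(hg _).2]
  have hnorm : ‖∑ k, t k • g k‖ ≤ ∑ k, t k :=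
    (norm_sum_le _ _).trans_eq <| Finset.sum_congr rfl fun k _ => by
      rw [norm_smul, (hg k).1, mul_one, Real.norm_of_nonneg (ht k)]
  linarith [apply_le_norm_of_norm_le_one hφ (∑ k, t k • g k)]

-- `u` is a difference of two nonnegative combinations of points of the face, both normed by `φ`.
theorem exists_apply_eq_norm_of_mem_span_face {φ : X →L[ℝ] ℝ} (hφ : ‖φ‖ ≤ 1) {u : X}
    (hu : u ∈ span ℝ (face φ)) : ∃ y : X, φ y = ‖y‖ ∧ φ (y + u) = ‖y + u‖ := by
  obtain ⟨m, c, g, rfl⟩ := mem_span_set'.1 hu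
  have hg : ∀ k, (g k : X) ∈ face φ := fun k => (g k).2
  refine ⟨∑ k, (c k)⁻ • (g k : X),
    apply_sum_smul_eq_norm_of_mem_face hφ (fun k => negPart_nonneg _) hg, ?_⟩
  have hsplit : ∑ k, (c k)⁻ • (g k : X) + ∑ k, c k • (g k : X) = ∑ k, (c k)⁺ • (g k : X) := by
    rw [← Finset.sum_add_distrib]
    refine Finset.sum_congr rfl fun k _ => ?_
    rw [← add_smul]
    congr 1
    linarith [posPart_sub_negPart (c k)]
  rw [hsplit]
  exact apply_sum_smul_eq_norm_of_mem_face hφ (fun k => posPart_nonneg _) hg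

theorem mul_sum_norm_le_sum_norm_add_smul {ι : Type*} [Fintype ι] {y : ι → X}
    (hmin : ∀ v : X, ∑ i, ‖y i‖ ≤ ∑ i, ‖y i + v‖) (c : ℝ) (v : X) :
    c * ∑ i, ‖y i‖ ≤ ∑ i, ‖v + c • y i‖ := by
  have hsum_nonneg : ∀ z : ι → X, 0 ≤ ∑ i, ‖z i‖ := fun z =>
    Finset.sum_nonneg fun i _ => norm_nonneg (z i)
  rcases le_or_gt c 0 with hc | hc
  · exact (mul_nonpos_of_nonpos_of_nonneg hc (hsum_nonneg y)).trans (hsum_nonneg _)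
  calc c * ∑ i, ‖y i‖ ≤ c * ∑ i, ‖y i + c⁻¹ • v‖ := mul_le_mul_of_nonneg_left (hmin _) hc.le
    _ = ∑ i, ‖v + c • y i‖ := by
      rw [Finset.mul_sum]
      refine Finset.sum_congr rfl fun i _ => ?_
      rw [show v + c • y i = c • (y i + c⁻¹ • v) by rw [smul_add, smul_inv_smul₀ hc.ne', add_comm],
        norm_smul, Real.norm_of_nonneg hc.le]

-- Hahn–Banach for the ℓ¹-norm on `ι → X`, starting from the functional on
-- `span (diagonal ∪ {y})` that vanishes on the diagonal and takes the value `∑ ‖y i‖` at `y`.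
theorem exists_linearMap_le_sum_norm_of_forall_sum_norm_le {ι : Type*} [Fintype ι] (y : ι → X)
    (hmin : ∀ v : X, ∑ i, ‖y i‖ ≤ ∑ i, ‖y i + v‖) :
    ∃ g : (ι → X) →ₗ[ℝ] ℝ, (∀ z, g z ≤ ∑ i, ‖z i‖) ∧ (∀ v, g (fun _ : ι => v) = 0) ∧
      g y = ∑ i, ‖y i‖ := by
  set N : (ι → X) → ℝ := fun z => ∑ i, ‖z i‖ with hN
  have hN_smul : ∀ c : ℝ, 0 < c → ∀ z, N (c • z) = c * N z := fun c hc z => by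
    simp [hN, norm_smul, abs_of_pos hc, Finset.mul_sum]
  have hN_add : ∀ z w, N (z + w) ≤ N z + N w := fun z w => by
    simpa only [hN, Pi.add_apply, ← Finset.sum_add_distrib] using
      Finset.sum_le_sum fun i _ => norm_add_le (z i) (w i)
  set D : Submodule ℝ (ι → X) := LinearMap.range (LinearMap.const (R := ℝ) (ι := ι) (M₂ := X))
  have hconst : ∀ v, (fun _ : ι => v) ∈ D := fun v => ⟨v, rfl⟩
  -- A diagonal `y` is forced by minimality to vanish, and then `g = 0` works.
  by_cases hy : y ∈ D
  · obtain ⟨w, rfl⟩ := hy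
    have hzero : ∑ _i : ι, ‖w‖ = 0 :=
      le_antisymm (by simpa using hmin (-w)) (Finset.sum_nonneg fun _ _ => norm_nonneg w)
    refine ⟨0, fun z => ?_, fun _ => rfl, by simpa using hzero.symm⟩
    exact Finset.sum_nonneg fun i _ => norm_nonneg (z i)
  set f₀ : (ι → X) →ₗ.[ℝ] ℝ := (0 : (ι → X) →ₗ[ℝ] ℝ).toPMap D
  replace hy : y ∉ f₀.domain := hy
  set f := f₀.supSpanSingleton y (N y) hy
  have hf : ∀ z : f.domain, f z ≤ N z := by
    rintro ⟨z, hz⟩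
    obtain ⟨d, hd, _, hc, rfl⟩ := mem_sup.1 hz
    obtain ⟨c, rfl⟩ := mem_span_singleton.1 hc
    rw [LinearPMap.supSpanSingleton_apply_mk _ _ _ hy _ hd c]
    obtain ⟨v, rfl⟩ := hd
    show (0 : ℝ) + c * ∑ i, ‖y i‖ ≤ ∑ i, ‖v + c • y i‖
    exact (zero_add _).trans_le (mul_sum_norm_le_sum_norm_add_smul hmin c v)
  obtain ⟨g, hgf, hgN⟩ := exists_extension_of_le_sublinear f N hN_smul hN_add hf
  refine ⟨g, hgN, fun v => ?_, ?_⟩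
  · rw [hgf ⟨_, mem_sup_left (hconst v)⟩,
      LinearPMap.supSpanSingleton_apply_mk_of_mem _ _ hy (hconst v)]
    rfl
  · rw [hgf ⟨y, mem_sup_right (mem_span_singleton_self y)⟩,
      LinearPMap.supSpanSingleton_apply_self]

theorem exists_sum_eq_zero_apply_eq_norm_of_forall_sum_norm_le {ι : Type*} [Fintype ι] (y : ι → X)
    (hmin : ∀ v : X, ∑ i, ‖y i‖ ≤ ∑ i, ‖y i + v‖) :
    ∃ φ : ι → (X →L[ℝ] ℝ), (∀ i, ‖φ i‖ ≤ 1) ∧ ∑ i, φ i = 0 ∧ ∀ i, φ i (y i) = ‖y i‖ := by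
  classical
  obtain ⟨g, hgN, hg_const, hgy⟩ := exists_linearMap_le_sum_norm_of_forall_sum_norm_le y hmin
  have hg_single : ∀ i v, g (Pi.single i v) ≤ ‖v‖ := fun i v => by
    simpa [Pi.single_apply, apply_ite] using hgN (Pi.single i v)
  let φ i := (g ∘ₗ LinearMap.single ℝ (fun _ => X) i).mkContinuous 1 fun v => by
    have := hg_single i (-v)
    simp only [Pi.single_neg, map_neg, norm_neg] at this
    simpa [abs_le] using ⟨by linarith, hg_single i v⟩
  have hφ_apply : ∀ i v, φ i v = g (Pi.single i v) := fun _ _ => rfl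
  have hsum : ∑ i, φ i (y i) = ∑ i, ‖y i‖ := by
    simp only [hφ_apply, ← map_sum, Finset.univ_sum_single, hgy]
  refine ⟨φ, fun i => LinearMap.mkContinuous_norm_le _ zero_le_one _, ?_, ?_⟩
  · ext v
    simpa [hφ_apply, ← map_sum, Finset.univ_sum_single] using hg_const v
  · exact fun i => (Finset.sum_eq_sum_iff_of_le fun i _ => hg_single i (y i)).1 hsum i
      (Finset.mem_univ i)

theorem sum_apply_sub_eq_of_sum_eq_zero {n : ℕ} {φ : Fin n → (X →L[ℝ] ℝ)}
    (hsum : ∑ i, φ i = 0) (x : Fin n → X) (p q : X) :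
    ∑ i, φ i (p - x i) = ∑ i, φ i (q - x i) := by
  have h : ∑ i, φ i (p - q) = 0 := by rw [← sum_apply, hsum]; rfl
  rw [← sub_eq_zero, ← Finset.sum_sub_distrib, ← h]
  exact Finset.sum_congr rfl fun i _ => by rw [← map_sub, sub_sub_sub_cancel_right]

theorem mem_ft_of_apply_eq_norm {n : ℕ} {x : Fin n → X} {p : X} {φ : Fin n → (X →L[ℝ] ℝ)}
    (hφ : ∀ i, ‖φ i‖ ≤ 1) (hsum : ∑ i, φ i = 0) (hp : ∀ i, φ i (p - x i) = ‖p - x i‖) :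
    p ∈ ft x := fun q =>
  calc ∑ i, ‖p - x i‖ = ∑ i, φ i (p - x i) := Finset.sum_congr rfl fun i _ => (hp i).symm
    _ = ∑ i, φ i (q - x i) := sum_apply_sub_eq_of_sum_eq_zero hsum x p q
    _ ≤ ∑ i, ‖q - x i‖ := Finset.sum_le_sum fun i _ => apply_le_norm_of_norm_le_one (hφ i) _

theorem exists_apply_eq_norm_of_mem_ft {n : ℕ} {x : Fin n → X} {p : X} (hp : p ∈ ft x) :
    ∃ φ : Fin n → (X →L[ℝ] ℝ), (∀ i, ‖φ i‖ ≤ 1) ∧ ∑ i, φ i = 0 ∧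
      ∀ i, φ i (p - x i) = ‖p - x i‖ :=
  exists_sum_eq_zero_apply_eq_norm_of_forall_sum_norm_le (fun i => p - x i) fun v => by
    simpa only [sub_add_eq_add_sub] using hp (p + v)

theorem apply_eq_norm_of_mem_ft {n : ℕ} {x : Fin n → X} {p q : X} {φ : Fin n → (X →L[ℝ] ℝ)}
    (hφ : ∀ i, ‖φ i‖ ≤ 1) (hsum : ∑ i, φ i = 0) (hp : ∀ i, φ i (p - x i) = ‖p - x i‖)
    (hq : q ∈ ft x) (i : Fin n) : φ i (q - x i) = ‖q - x i‖ := by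
  have hle : ∀ j, φ j (q - x j) ≤ ‖q - x j‖ := fun j => apply_le_norm_of_norm_le_one (hφ j) _
  have hsum_eq : ∑ j, φ j (q - x j) = ∑ j, ‖q - x j‖ := by
    refine le_antisymm (Finset.sum_le_sum fun j _ => hle j) ?_
    calc ∑ j, ‖q - x j‖ ≤ ∑ j, ‖p - x j‖ := hq p
      _ = ∑ j, φ j (p - x j) := Finset.sum_congr rfl fun j _ => (hp j).symm
      _ = ∑ j, φ j (q - x j) := sum_apply_sub_eq_of_sum_eq_zero hsum x p q
  exact (Finset.sum_eq_sum_iff_of_le fun j _ => hle j).1 hsum_eq i (Finset.mem_univ i)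

def HasCommonFaceDirection {ι : Type*} (φ : ι → (X →L[ℝ] ℝ)) : Prop :=
  ∃ u : X, u ≠ 0 ∧ ∀ i, u ∈ span ℝ (face (φ i))

theorem exists_ne_mem_ft_iff_hasCommonFaceDirection {n : ℕ} :
    (∃ x : Fin n → X, ∃ a ∈ ft x, ∃ b ∈ ft x, a ≠ b) ↔
      ∃ φ : Fin n → (X →L[ℝ] ℝ), (∀ i, ‖φ i‖ = 1) ∧ ∑ i, φ i = 0 ∧ HasCommonFaceDirection φ := by
  constructor
  · rintro ⟨x, a, ha, b, hb, hab⟩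
    obtain ⟨φ, hφ, hsum, hφa⟩ := exists_apply_eq_norm_of_mem_ft ha
    have hφb := apply_eq_norm_of_mem_ft hφ hsum hφa hb
    refine ⟨φ, fun i => ?_, hsum, b - a, sub_ne_zero.2 hab.symm, fun i => ?_⟩
    · rcases eq_or_ne a (x i) with rfl | hai
      · exact norm_eq_one_of_apply_eq_norm (hφ i) (sub_ne_zero.2 hab.symm) (hφb i)
      · exact norm_eq_one_of_apply_eq_norm (hφ i) (sub_ne_zero.2 hai) (hφa i)
    · rw [← sub_sub_sub_cancel_right b a (x i)]
      exact sub_mem (mem_span_face_of_apply_eq_norm _ (hφb i))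
        (mem_span_face_of_apply_eq_norm _ (hφa i))
  · rintro ⟨φ, hφ, hsum, u, hu0, hu⟩
    choose y hy hyu using fun i => exists_apply_eq_norm_of_mem_span_face (hφ i).le (hu i)
    refine ⟨fun i => -y i, 0, ?_, u, ?_, hu0.symm⟩
    · exact mem_ft_of_apply_eq_norm (fun i => (hφ i).le) hsum fun i => by simpa using hy i
    · exact mem_ft_of_apply_eq_norm (fun i => (hφ i).le) hsum fun i => by
        simpa [add_comm] using hyu i

theorem HasCommonFaceDirection.finrank_span_face_union_eq_two {ι : Type*}
    {φ : ι → (X →L[ℝ] ℝ)} (h : HasCommonFaceDirection φ) {i j : ι} (hi : IsPointFace (φ i))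
    (hj : IsSegmentFace (φ j)) :
    Module.finrank ℝ (span ℝ (face (φ i) ∪ face (φ j))) = 2 := by
  obtain ⟨u, hu0, hu⟩ := h
  obtain ⟨p, hp⟩ := hi
  have hup : u ∈ ℝ ∙ p := hp ▸ hu i
  obtain ⟨c, rfl⟩ := mem_span_singleton.1 hup
  have hc : IsUnit c := isUnit_iff_ne_zero.2 (left_ne_zero_of_smul hu0)
  have hle : span ℝ (face (φ i)) ≤ span ℝ (face (φ j)) := by
    rw [hp, ← span_singleton_smul_eq hc, span_singleton_le_iff_mem]
    exact hu j
  rwa [span_union, sup_eq_right.2 hle]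

theorem face_nonempty [FiniteDimensional ℝ X] [Nontrivial X] {φ : X →L[ℝ] ℝ} (hφ : ‖φ‖ = 1) :
    (face φ).Nonempty := by
  obtain ⟨u, hu, hφu⟩ := (isCompact_sphere (0 : X) 1).exists_sSup_image_eq
    (NormedSpace.sphere_nonempty.2 zero_le_one)
    (by fun_prop : Continuous fun z => ‖φ z‖).continuousOn
  rw [φ.sSup_sphere_eq_norm, hφ, Real.norm_eq_abs] at hφu
  rw [mem_sphere_zero_iff_norm] at hu
  rcases abs_eq_abs.1 (hφu.symm.trans abs_one.symm) with h | h
  · exact ⟨u, hu, h⟩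
  · exact ⟨-u, by rwa [norm_neg], by rw [map_neg, h, neg_neg]⟩

theorem isPointFace_of_finrank_span_face_le_one [FiniteDimensional ℝ X] {φ : X →L[ℝ] ℝ}
    {p : X} (hp : p ∈ face φ) (h : Module.finrank ℝ (span ℝ (face φ)) ≤ 1) : IsPointFace φ := by
  have hp0 : p ≠ 0 := ne_zero_of_norm_ne_zero (hp.1.trans_ne one_ne_zero)
  have hspan : ℝ ∙ p = span ℝ (face φ) :=
    eq_of_le_of_finrank_le (span_mono (Set.singleton_subset_iff.2 hp))
      (h.trans (finrank_span_singleton hp0).ge)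
  refine ⟨p, Set.eq_singleton_iff_unique_mem.2 ⟨hp, fun q hq => ?_⟩⟩
  obtain ⟨c, rfl⟩ := mem_span_singleton.1 (hspan ▸ subset_span hq)
  have hc : c = 1 := by simpa [hp.2] using hq.2
  rw [hc, one_smul]

theorem isPointFace_or_isSegmentFace_or_span_face_eq_top (hd : Module.finrank ℝ X = 3)
    {φ : X →L[ℝ] ℝ} (hφ : ‖φ‖ = 1) :
    IsPointFace φ ∨ IsSegmentFace φ ∨ span ℝ (face φ) = ⊤ := by
  have : FiniteDimensional ℝ X := .of_finrank_eq_succ hd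
  have : Nontrivial X := Module.nontrivial_of_finrank_eq_succ hd
  obtain ⟨p, hp⟩ := face_nonempty hφ
  have hle : Module.finrank ℝ (span ℝ (face φ)) ≤ 3 := hd ▸ finrank_le _
  rcases Nat.lt_or_ge (Module.finrank ℝ (span ℝ (face φ))) 2 with hlt | hge
  · exact .inl (isPointFace_of_finrank_span_face_le_one hp (Nat.le_of_lt_succ hlt))
  rcases hge.eq_or_lt with h2 | h3
  · exact .inr (.inl h2.symm)
  · exact .inr (.inr (eq_top_of_finrank_eq (by omega)))

theorem span_le_of_finrank_span_union_eq [FiniteDimensional ℝ X] {S T : Set X}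
    (h : Module.finrank ℝ (span ℝ (S ∪ T)) = Module.finrank ℝ (span ℝ T)) :
    span ℝ S ≤ span ℝ T := by
  have heq : span ℝ T = span ℝ (S ∪ T) :=
    eq_of_le_of_finrank_eq (span_mono Set.subset_union_right) h.symm
  exact heq ▸ span_mono Set.subset_union_left

theorem hasCommonFaceDirection_of_finrank_eq_three (hd : Module.finrank ℝ X = 3) {ι : Type*}
    {φ : ι → (X →L[ℝ] ℝ)} (hφ : ∀ i, ‖φ i‖ = 1)
    (hA : ∃ v : X, v ≠ 0 ∧ ∀ i, IsPointFace (φ i) → v ∈ span ℝ (face (φ i)))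
    (hB : ∀ i j, IsPointFace (φ i) → IsSegmentFace (φ j) →
      Module.finrank ℝ (span ℝ (face (φ i) ∪ face (φ j))) = 2)
    (hC : ∃ w : X, w ≠ 0 ∧ ∀ j, IsSegmentFace (φ j) → w ∈ span ℝ (face (φ j))) :
    HasCommonFaceDirection φ := by
  have : FiniteDimensional ℝ X := .of_finrank_eq_succ hd
  have hcases := fun i => isPointFace_or_isSegmentFace_or_span_face_eq_top hd (hφ i)
  by_cases hpoint : ∃ i₀, IsPointFace (φ i₀)
  · obtain ⟨i₀, hi₀⟩ := hpoint
    obtain ⟨v, hv0, hv⟩ := hA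
    refine ⟨v, hv0, fun i => ?_⟩
    rcases hcases i with hi | hi | hi
    · exact hv i hi
    · exact span_le_of_finrank_span_union_eq ((hB i₀ i hi₀ hi).trans hi.symm) (hv i₀ hi₀)
    · exact hi ▸ mem_top
  · obtain ⟨w, hw0, hw⟩ := hC
    refine ⟨w, hw0, fun i => ?_⟩
    rcases hcases i with hi | hi | hi
    · exact absurd ⟨i, hi⟩ hpoint
    · exact hw i hi
    · exact hi ▸ mem_top

end

theorem nonunique_ft_iff_consistent_faces_dim3_general
    {X : Type*} [NormedAddCommGroup X] [NormedSpace ℝ X]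
    (hd : Module.finrank ℝ X = 3)
    {n : ℕ} :
    (∃ x : Fin n → X, ∃ a ∈ ft x, ∃ b ∈ ft x, a ≠ b) ↔
      ∃ φ : Fin n → (X →L[ℝ] ℝ),
        (∀ i, ‖φ i‖ = 1) ∧ ∑ i, φ i = 0 ∧
        (∃ v : X, v ≠ 0 ∧
          ∀ i, IsPointFace (φ i) → v ∈ Submodule.span ℝ (face (φ i))) ∧
        (∀ i j : Fin n, IsPointFace (φ i) → IsSegmentFace (φ j) →
          Module.finrank ℝ (Submodule.span ℝ (face (φ i) ∪ face (φ j))) = 2) ∧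
        (∃ w : X, w ≠ 0 ∧
          ∀ j, IsSegmentFace (φ j) → w ∈ Submodule.span ℝ (face (φ j))) := by
  rw [exists_ne_mem_ft_iff_hasCommonFaceDirection]
  refine exists_congr fun φ => and_congr_right fun hφ => and_congr_right fun _ => ⟨?_, ?_⟩
  · intro hcommon
    have ⟨u, hu0, hu⟩ := hcommon
    exact ⟨⟨u, hu0, fun i _ => hu i⟩, fun _ _ => hcommon.finrank_span_face_union_eq_two,
      ⟨u, hu0, fun j _ => hu j⟩⟩
  · rintro ⟨hA, hB, hC⟩
    exact hasCommonFaceDirection_of_finrank_eq_three hd hφ hA hB hC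

/-- Criterion for non-uniqueness in a three-dimensional Minkowski space: for odd `n ≥ 3`,
there exist `n` points with non-unique Fermat–Torricelli set iff there is a consistent set
of `n` faces of the unit sphere satisfying conditions (a), (b), (c). -/
theorem nonunique_ft_iff_consistent_faces_dim3
    {X : Type*} [NormedAddCommGroup X] [NormedSpace ℝ X]
    (hd : Module.finrank ℝ X = 3)
    {n : ℕ} (hn : 3 ≤ n) (hodd : Odd n) :
    (∃ x : Fin n → X, ∃ a ∈ ft x, ∃ b ∈ ft x, a ≠ b) ↔
      ∃ φ : Fin n → (X →L[ℝ] ℝ),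
        (∀ i, ‖φ i‖ = 1) ∧ ∑ i, φ i = 0 ∧
        (∃ v : X, v ≠ 0 ∧
          ∀ i, IsPointFace (φ i) → v ∈ Submodule.span ℝ (face (φ i))) ∧
        (∀ i j : Fin n, IsPointFace (φ i) → IsSegmentFace (φ j) →
          Module.finrank ℝ (Submodule.span ℝ (face (φ i) ∪ face (φ j))) = 2) ∧
        (∃ w : X, w ≠ 0 ∧
          ∀ j, IsSegmentFace (φ j) → w ∈ Submodule.span ℝ (face (φ j))) :=
  nonunique_ft_iff_consistent_faces_dim3_general hd
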